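/- arXiv:1804.05793 — 7 statements merged into one kernel-verified Lean document; each statement's English description precedes it below -/
import Mathlib

section
/- Deciding whether a given graph is a half-square of a balanced bisplit bipartite graph is NP-complete: the problem 'Edge Clique Cover' reduces to it in polynomial time. Specifically, for a connected graph G = (V, E_G) with no universal vertex and k ≤ |E_G|, let G' be obtained from G by adding k new universal vertices U (forming a clique joined completely to V). Then the edges of G can be covered by k cliques if and only if G' is a half-square of a balanced bisplit bipartite graph. -/
/-- The half-square of a bipartite graph given by an incidence relation `E : X → Y → Prop`:
two distinct vertices of `X` are adjacent iff they have a common neighbor in `Y`. -/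
def halfSquare {X Y : Type*} (E : X → Y → Prop) : SimpleGraph X where
  Adj u v := u ≠ v ∧ ∃ y, E u y ∧ E v y
  symm := by
    constructor
    rintro u v ⟨h, y, hu, hv⟩
    exact ⟨h.symm, y, hv, hu⟩
  loopless := by
    constructor
    rintro u ⟨h, -⟩
    exact h rfl

/-- `C` is a maximal clique of `G`. -/
def MaximalClique {V : Type*} (G : SimpleGraph V) (C : Set V) : Prop :=
  G.IsClique C ∧ ∀ D, G.IsClique D → C ⊆ D → D = C

/-- `G'` obtained from `G` by adding `k` new universal vertices: the new vertices form a
clique and are joined to all old vertices. -/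
def addUniversal {V : Type*} (G : SimpleGraph V) (k : ℕ) : SimpleGraph (V ⊕ Fin k) where
  Adj a b := a ≠ b ∧ ∀ u v, a = Sum.inl u → b = Sum.inl v → G.Adj u v
  symm := by
    constructor
    rintro a b ⟨hab, h⟩
    exact ⟨hab.symm, fun u v hb ha => (h v u ha hb).symm⟩
  loopless := by
    constructor
    rintro a ⟨h, -⟩
    exact h rfl

/-- A bipartite graph (given by incidence relation `E : X → Y → Prop`) is balanced bisplit:
`|X| = |Y|`, there is `X₁ ⊆ X` completely joined to `Y`, and the edges between
`X₂ = X \ X₁` and `Y₂ = Y \ Y₁` form a perfect matching of `X₂` onto `Y₂`. -/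
def IsBalancedBisplit {X Y : Type*} [Fintype X] [Fintype Y] (E : X → Y → Prop) : Prop :=
  Fintype.card X = Fintype.card Y ∧
  ∃ (X₁ : Set X) (Y₁ : Set Y),
    (∀ x ∈ X₁, ∀ y, E x y) ∧
    ∃ f : {x // x ∉ X₁} → {y // y ∉ Y₁}, Function.Bijective f ∧
      ∀ (x : {x // x ∉ X₁}) (y : {y // y ∉ Y₁}), (E x.val y.val ↔ f x = y)

/--  is a half-square of some balanced bisplit bipartite graph. -/
def IsHalfSquareOfBalancedBisplit {V : Type} [Fintype V] (G : SimpleGraph V) : Prop :=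
  ∃ (W : Type) (iW : Fintype W) (E : V → W → Prop),
    @IsBalancedBisplit V W inferInstance iW E ∧ halfSquare E = G

/-! Given cliques `Q₁, …, Q_k` covering the edges of `G`, let `Y` consist of the `Qᵢ` and a copy
`v'` of each `v ∈ V`; join each new vertex `uᵢ` to all of `Y`, and each `v` to `v'` and to the
`Qᵢ` containing it. This is balanced bisplit with half-square `G'`. Conversely, in a balanced
bisplit realisation of `G'` the vertices of `X₁` are universal, hence new since `G` has no
universal vertex, so `|Y₁| = |X₁| ≤ k`. As `Y₂` is matched, two vertices of `V` have no common
neighbour there, so every edge of `G` lies in the neighbourhood of some `y ∈ Y₁`; these at most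
`k` neighbourhoods are cliques. -/

theorem Sum.swap_mem_range_inl_iff {α β : Type*} {x : α ⊕ β} :
    x.swap ∈ Set.range Sum.inl ↔ x ∈ Set.range Sum.inr := by
  cases x <;> simp

def IsEdgeCliqueCover {V ι : Type*} (G : SimpleGraph V) (Q : ι → Set V) : Prop :=
  (∀ i, G.IsClique (Q i)) ∧ ∀ u v, G.Adj u v → ∃ i, u ∈ Q i ∧ v ∈ Q i

namespace IsEdgeCliqueCover

variable {V ι κ : Type*} {G : SimpleGraph V} {Q : ι → Set V}

theorem extend (hQ : IsEdgeCliqueCover G Q) (e : ι ↪ κ) :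
    IsEdgeCliqueCover G (Function.extend e Q ⊥) := by
  refine ⟨fun j => ?_, fun u v huv => ?_⟩
  · by_cases hj : ∃ i, e i = j
    · obtain ⟨i, rfl⟩ := hj
      rw [e.injective.extend_apply]
      exact hQ.1 i
    · rw [Function.extend_apply' _ _ _ hj]
      exact Set.pairwise_empty _
  · obtain ⟨i, hu, hv⟩ := hQ.2 u v huv
    exact ⟨e i, by simpa [e.injective.extend_apply] using And.intro hu hv⟩

theorem exists_fin [Finite ι] {k : ℕ} (hQ : IsEdgeCliqueCover G Q) (hk : Nat.card ι ≤ k) :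
    ∃ Q' : Fin k → Set V, IsEdgeCliqueCover G Q' := by
  have := Fintype.ofFinite ι
  obtain ⟨e⟩ := Function.Embedding.nonempty_of_card_le (β := Fin k)
    (by simpa [Nat.card_eq_fintype_card] using hk)
  exact ⟨_, hQ.extend e⟩

end IsEdgeCliqueCover

section HalfSquare

variable {X Y : Type*} {E : X → Y → Prop}

theorem halfSquare_adj {x x' : X} :
    (halfSquare E).Adj x x' ↔ x ≠ x' ∧ ∃ y, E x y ∧ E x' y :=
  Iff.rfl

theorem isClique_halfSquare_setOf (y : Y) : (halfSquare E).IsClique {x | E x y} :=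
  fun _ hx _ hx' hne => ⟨hne, y, hx, hx'⟩

end HalfSquare

section Bisplit

variable {X Y : Type*} {E : X → Y → Prop} {X₁ : Set X} {Y₁ : Set Y}

theorem ncard_eq_of_compl_equiv [Finite X] [Finite Y] (hcard : Nat.card X = Nat.card Y)
    (e : {x // x ∉ X₁} ≃ {y // y ∉ Y₁}) : X₁.ncard = Y₁.ncard := by
  have hcompl : X₁ᶜ.ncard = Y₁ᶜ.ncard := by
    rw [← Nat.card_coe_set_eq, ← Nat.card_coe_set_eq]
    exact Nat.card_congr e
  have hX := Set.ncard_add_ncard_compl X₁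
  have hY := Set.ncard_add_ncard_compl Y₁
  omega

theorem mem_of_matching_of_common_neighbor {f : {x // x ∉ X₁} → {y // y ∉ Y₁}}
    (hf : f.Injective) (hfE : ∀ x y, E x.val y.val ↔ f x = y) {x x' : X} {y : Y}
    (hx : x ∉ X₁) (hx' : x' ∉ X₁) (hne : x ≠ x') (hxy : E x y) (hx'y : E x' y) : y ∈ Y₁ := by
  by_contra hy
  have hfx : f ⟨x, hx⟩ = ⟨y, hy⟩ := (hfE _ _).mp hxy
  have hfx' : f ⟨x', hx'⟩ = ⟨y, hy⟩ := (hfE _ _).mp hx'y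
  exact hne (congrArg Subtype.val (hf (hfx.trans hfx'.symm)))

theorem IsBalancedBisplit.exists_neighbor [Fintype X] [Fintype Y] (h : IsBalancedBisplit E)
    (x : X) : ∃ y, E x y := by
  obtain ⟨hcard, X₁, Y₁, hX₁, f, -, hfE⟩ := h
  by_cases hx : x ∈ X₁
  · have : Nonempty Y := Fintype.card_pos_iff.mp (hcard ▸ Fintype.card_pos_iff.mpr ⟨x⟩)
    exact ⟨Classical.arbitrary Y, hX₁ x hx _⟩
  · exact ⟨f ⟨x, hx⟩, (hfE ⟨x, hx⟩ _).mpr rfl⟩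

theorem IsBalancedBisplit.halfSquare_adj_of_forall [Fintype X] [Fintype Y]
    (h : IsBalancedBisplit E) {x x' : X} (hx : ∀ y, E x y) (hne : x ≠ x') :
    (halfSquare E).Adj x x' :=
  have ⟨y, hy⟩ := h.exists_neighbor x'
  ⟨hne, y, hx y, hy⟩

end Bisplit

section AddUniversal

variable {V : Type*} {G : SimpleGraph V} {k : ℕ}

@[simp]
theorem addUniversal_adj_inl {u v : V} :
    (addUniversal G k).Adj (.inl u) (.inl v) ↔ G.Adj u v :=
  ⟨fun h => h.2 u v rfl rfl, fun h => ⟨by simpa using h.ne, by rintro _ _ ⟨⟩ ⟨⟩; exact h⟩⟩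

@[simp]
theorem addUniversal_adj_inr_left {i : Fin k} {b : V ⊕ Fin k} :
    (addUniversal G k).Adj (.inr i) b ↔ .inr i ≠ b :=
  ⟨And.left, fun h => ⟨h, by rintro _ _ ⟨⟩⟩⟩

@[simp]
theorem addUniversal_adj_inr_right {i : Fin k} {a : V ⊕ Fin k} :
    (addUniversal G k).Adj a (.inr i) ↔ a ≠ .inr i :=
  ⟨And.left, fun h => ⟨h, by rintro _ _ _ ⟨⟩⟩⟩

end AddUniversal

section CliqueCoverIncidence

variable {V ι : Type*}

/-- `inr i` is the new universal vertex `uᵢ`; on the `Y` side, `inl i` stands for the clique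
`Q i` and `inr v` is the matching partner of `v`. -/
def cliqueCoverIncidence (Q : ι → Set V) : V ⊕ ι → ι ⊕ V → Prop
  | .inr _, _ => True
  | .inl v, .inl i => v ∈ Q i
  | .inl v, .inr w => v = w

theorem isBalancedBisplit_cliqueCoverIncidence [Fintype V] [Fintype ι] (Q : ι → Set V) :
    IsBalancedBisplit (cliqueCoverIncidence Q) := by
  refine ⟨Fintype.card_congr (Equiv.sumComm _ _), Set.range .inr, Set.range .inl,
    by rintro _ ⟨i, rfl⟩ _; trivial, fun x => ⟨x.1.swap, mt Sum.swap_mem_range_inl_iff.mp x.2⟩,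
    ⟨?_, ?_⟩, ?_⟩
  · intro x x' h
    exact Subtype.ext (Sum.swap_leftInverse.injective (congrArg Subtype.val h))
  · intro y
    refine ⟨⟨y.1.swap, ?_⟩, Subtype.ext y.1.swap_swap⟩
    rw [← Sum.swap_mem_range_inl_iff, Sum.swap_swap]
    exact y.2
  · rintro ⟨v | i, hx⟩ ⟨j | w, hy⟩
    · exact absurd ⟨j, rfl⟩ hy
    · simp [cliqueCoverIncidence]
    all_goals exact absurd ⟨i, rfl⟩ hx

theorem halfSquare_cliqueCoverIncidence {G : SimpleGraph V} {k : ℕ} {Q : Fin k → Set V}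
    (hQ : IsEdgeCliqueCover G Q) : halfSquare (cliqueCoverIncidence Q) = addUniversal G k := by
  ext (u | i) b
  · rcases b with v | j
    · simp only [halfSquare_adj, addUniversal_adj_inl]
      constructor
      · rintro ⟨hne, i | w, hu, hv⟩
        · exact hQ.1 i hu hv (by simpa using hne)
        · exact absurd (hu.trans hv.symm) (by simpa using hne)
      · intro huv
        obtain ⟨i, hu, hv⟩ := hQ.2 u v huv
        exact ⟨by simpa using huv.ne, .inl i, hu, hv⟩
    · rw [halfSquare_adj, addUniversal_adj_inr_right]
      exact and_iff_left_of_imp fun _ => ⟨.inr u, rfl, trivial⟩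
  · rw [halfSquare_adj, addUniversal_adj_inr_left]
    refine and_iff_left_of_imp fun _ => ?_
    rcases b with v | j
    · exact ⟨.inr v, trivial, rfl⟩
    · exact ⟨.inl i, trivial, trivial⟩

end CliqueCoverIncidence

theorem exists_isEdgeCliqueCover_of_halfSquare_eq {V W : Type*} [Fintype V] [Fintype W]
    {G : SimpleGraph V} {k : ℕ} (huniv : ¬ ∃ v : V, ∀ u, u ≠ v → G.Adj v u)
    {E : V ⊕ Fin k → W → Prop} (hE : IsBalancedBisplit E)
    (hEq : halfSquare E = addUniversal G k) : ∃ Q : Fin k → Set V, IsEdgeCliqueCover G Q := by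
  obtain ⟨hcard, X₁, Y₁, hX₁, f, hf, hfE⟩ := id hE
  have hinl (v : V) : .inl v ∉ X₁ := fun hv => huniv ⟨v, fun u hu => by
    have := hE.halfSquare_adj_of_forall (hX₁ _ hv) (x' := .inl u) (by simpa using hu.symm)
    rwa [hEq, addUniversal_adj_inl] at this⟩
  have hX₁_sub : X₁ ⊆ Set.range .inr := by
    rintro (v | i) hv
    exacts [absurd hv (hinl v), ⟨i, rfl⟩]
  have hY₁ : Y₁.ncard ≤ k := calc
    Y₁.ncard = X₁.ncard := by
      refine (ncard_eq_of_compl_equiv ?_ (Equiv.ofBijective f hf)).symm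
      simpa [Nat.card_eq_fintype_card] using hcard
    _ ≤ (Set.range .inr : Set (V ⊕ Fin k)).ncard := Set.ncard_le_ncard hX₁_sub
    _ = k := by simp [Set.ncard_range_of_injective Sum.inr_injective]
  refine IsEdgeCliqueCover.exists_fin (Q := fun y : Y₁ => {v | E (.inl v) y})
    ⟨fun y u hu v hv hne => ?_, fun u v huv => ?_⟩ hY₁
  · have := isClique_halfSquare_setOf (E := E) y hu hv (by simpa using hne)
    rwa [hEq, addUniversal_adj_inl] at this
  · obtain ⟨hne, y, hu, hv⟩ : (halfSquare E).Adj (.inl u) (.inl v) := by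
      rwa [hEq, addUniversal_adj_inl]
    have hy : y ∈ Y₁ :=
      mem_of_matching_of_common_neighbor hf.injective hfE (hinl u) (hinl v) hne hu hv
    exact ⟨⟨y, hy⟩, hu, hv⟩

theorem stmt_2_general {V : Type} [Fintype V] (G : SimpleGraph V) (k : ℕ)
    (huniv : ¬ ∃ v : V, ∀ u, u ≠ v → G.Adj v u) :
    (∃ Q : Fin k → Set V, (∀ i, G.IsClique (Q i)) ∧
        ∀ u v, G.Adj u v → ∃ i, u ∈ Q i ∧ v ∈ Q i) ↔
    IsHalfSquareOfBalancedBisplit (addUniversal G k) :=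
  ⟨fun ⟨Q, hQ⟩ => ⟨Fin k ⊕ V, inferInstance, cliqueCoverIncidence Q,
      isBalancedBisplit_cliqueCoverIncidence Q, halfSquare_cliqueCoverIncidence hQ⟩,
    fun ⟨_, _, _, hE, hEq⟩ => exists_isEdgeCliqueCover_of_halfSquare_eq huniv hE hEq⟩

/-- The hardness reduction: for a connected graph `G` with no universal vertex and
`k ≤ |E_G|`, the edges of `G` can be covered by `k` cliques iff the graph `G'`
obtained by adding `k` new universal vertices is a half-square of a balanced bisplit
bipartite graph. -/
theorem stmt_2 {V : Type} [Fintype V] (G : SimpleGraph V) [DecidableRel G.Adj] (k : ℕ)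
    (hconn : G.Connected)
    (huniv : ¬ ∃ v : V, ∀ u, u ≠ v → G.Adj v u)
    (hk : k ≤ G.edgeFinset.card) :
    (∃ Q : Fin k → Set V, (∀ i, G.IsClique (Q i)) ∧
        ∀ u v, G.Adj u v → ∃ i, u ∈ Q i ∧ v ∈ Q i) ↔
    IsHalfSquareOfBalancedBisplit (addUniversal G k) :=
  stmt_2_general G k huniv
end

section
/- If B = (X, Y, E_B) is a star convex bipartite graph with associated star centered at x₀ ∈ X, then in the half-square B²[Y]: the set Y₀ = {y ∈ Y : x₀ ∈ N(y)} is a clique, and the set Y₁ = Y \ Y₀ partitions into cliques N(x) ∩ Y₁ over x ∈ N(Y₁), with vertices in distinct such cliques nonadjacent in B²[Y]. Consequently B²[Y] is obtained from a split graph by substituting vertices by cliques. -/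
/-- `E : X → Y → Prop` is star convex with respect to the star on `X` centered at `x₀`:
every neighborhood `N(y)` with at least two vertices contains the center `x₀`
(equivalently, `N(y)` induces a substar of the star centered at `x₀`). -/
def IsStarConvex {X Y : Type*} (E : X → Y → Prop) (x₀ : X) : Prop :=
  ∀ y x x', E x y → E x' y → x ≠ x' → E x₀ y

/-- A split graph: the vertex set partitions into a clique and a stable set. -/
def IsSplitGraph {A : Type*} (S : SimpleGraph A) : Prop :=
  ∃ K : Set A, S.IsClique K ∧ ∀ a ∉ K, ∀ b ∉ K, ¬ S.Adj a b

/-- `G` is obtained from `S` by substituting each vertex `a` of `S` by the (nonempty)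
clique `f ⁻¹ {a}`: distinct vertices of `G` are adjacent iff they lie in the same
substituted clique or their images are adjacent in `S`. -/
def ObtainedBySubstCliques {V A : Type*} (G : SimpleGraph V) (S : SimpleGraph A) : Prop :=
  ∃ f : V → A, Function.Surjective f ∧
    ∀ u v, u ≠ v → (G.Adj u v ↔ (f u = f v ∨ S.Adj (f u) (f v)))

/-!
Star convexity forces every `y ∉ N(x₀)` to have at most one neighbour. Collapse each class of
vertices of `Y` with the same nonempty neighbourhood to a representative: the half-square is
obtained from the half-square on the representatives by substituting cliques. Among the
representatives, those in `N(x₀)` form a clique, and the others have pairwise distinct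
neighbourhoods of size at most one, so they are pairwise nonadjacent: the reduced graph is split.
-/

section TwinReduction

variable {V W : Type*} (R : V → W → Prop)

lemma isClique_halfSquare_setOf_s7 (w : W) : (halfSquare R).IsClique {v | R v w} :=
  fun _ hu _ hv huv => ⟨huv, w, hu, hv⟩

/-- Isolated vertices are pairwise nonadjacent in the half-square, so they are not merged. -/
noncomputable def twinRep (v : V) : V :=
  open Classical in
  if ∃ w, R v w then (⟦v⟧ : Quotient (Setoid.ker R)).out else v

variable {R}

lemma twinRep_of_isolated {v : V} (hv : ¬ ∃ w, R v w) : twinRep R v = v :=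
  if_neg hv

lemma apply_twinRep (v : V) : R (twinRep R v) = R v := by
  unfold twinRep
  split_ifs
  · exact Setoid.ker_apply_mk_out v
  · rfl

lemma twinRep_eq_of_apply_eq {u v : V} (h : R u = R v) (hu : ∃ w, R u w) :
    twinRep R u = twinRep R v := by
  have hq : (⟦u⟧ : Quotient (Setoid.ker R)) = ⟦v⟧ := Quotient.sound h
  rw [twinRep, twinRep, if_pos hu, if_pos (h ▸ hu), hq]

lemma twinRep_twinRep (v : V) : twinRep R (twinRep R v) = twinRep R v := by
  by_cases hv : ∃ w, R v w
  · exact twinRep_eq_of_apply_eq (apply_twinRep v) (apply_twinRep (R := R) v ▸ hv)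
  · rw [twinRep_of_isolated hv, twinRep_of_isolated hv]

lemma halfSquare_adj_iff_twinRep {u v : V} (huv : u ≠ v) :
    (halfSquare R).Adj u v ↔
      twinRep R u = twinRep R v ∨ (halfSquare R).Adj (twinRep R u) (twinRep R v) := by
  have hu := apply_twinRep (R := R) u
  have hv := apply_twinRep (R := R) v
  constructor
  · rintro ⟨-, w, hwu, hwv⟩
    refine or_iff_not_imp_left.2 fun hne => ⟨hne, w, ?_, ?_⟩
    · rwa [hu]
    · rwa [hv]
  · rintro (heq | ⟨-, w, hwu, hwv⟩)
    · have hR : R u = R v := by rw [← hu, ← hv, heq]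
      by_cases hiso : ∃ w, R u w
      · obtain ⟨w, hw⟩ := hiso
        exact ⟨huv, w, hw, hR ▸ hw⟩
      · have hiso' : ¬ ∃ w, R v w := hR ▸ hiso
        rw [twinRep_of_isolated hiso, twinRep_of_isolated hiso'] at heq
        exact absurd heq huv
    · exact ⟨huv, w, hu ▸ hwu, hv ▸ hwv⟩

abbrev twinReduction (R : V → W → Prop) : SimpleGraph {v // twinRep R v = v} :=
  (halfSquare R).induce {v | twinRep R v = v}

theorem obtainedBySubstCliques_twinReduction :
    ObtainedBySubstCliques (halfSquare R) (twinReduction R) :=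
  ⟨fun v => ⟨twinRep R v, twinRep_twinRep v⟩, fun a => ⟨a, Subtype.ext a.2⟩,
    fun _ _ huv => (halfSquare_adj_iff_twinRep huv).trans (by simp [Subtype.ext_iff])⟩

end TwinReduction

namespace IsStarConvex

variable {X Y : Type*} {E : X → Y → Prop} {x₀ : X}

lemma eq_of_not_center (h : IsStarConvex E x₀) {y : Y} (hy : ¬ E x₀ y) {x x' : X}
    (hx : E x y) (hx' : E x' y) : x = x' :=
  not_not.1 fun hne => hy (h y x x' hx hx' hne)

lemma swap_eq_of_not_center (h : IsStarConvex E x₀) {y y' : Y} (hy : ¬ E x₀ y)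
    (hy' : ¬ E x₀ y') {x : X} (hx : E x y) (hx' : E x y') :
    Function.swap E y = Function.swap E y' := by
  funext z
  exact propext ⟨fun hz => h.eq_of_not_center hy hx hz ▸ hx',
    fun hz => h.eq_of_not_center hy' hx' hz ▸ hx⟩

theorem isSplitGraph_twinReduction (h : IsStarConvex E x₀) :
    IsSplitGraph (twinReduction (Function.swap E)) := by
  refine ⟨{a | E x₀ a.1}, fun a ha b hb hab => ⟨Subtype.coe_ne_coe.2 hab, x₀, ha, hb⟩, ?_⟩
  rintro ⟨a, ha⟩ ha₀ ⟨b, hb⟩ hb₀ ⟨hab, x, hxa, hxb⟩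
  have hrep := twinRep_eq_of_apply_eq (h.swap_eq_of_not_center ha₀ hb₀ hxa hxb) ⟨x, hxa⟩
  exact hab (ha.symm.trans (hrep.trans hb))

end IsStarConvex

/-- If `B = (X, Y, E)` is star convex with star centered at `x₀ ∈ X`, then in the
half-square `B²[Y]`: the set `Y₀ = N(x₀)` is a clique; for each `x`, the set
`N(x) ∩ Y₁` (where `Y₁ = Y \ Y₀`) is a clique; vertices of `Y₁` belonging to such sets
for distinct `x`'s are nonadjacent; and consequently `B²[Y]` is obtained from a split
graph by substituting vertices by cliques. -/
theorem stmt_7 {X Y : Type} (E : X → Y → Prop) (x₀ : X) (h : IsStarConvex E x₀) :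
    (halfSquare (Function.swap E)).IsClique {y | E x₀ y} ∧
    (∀ x : X, (halfSquare (Function.swap E)).IsClique {y | E x y ∧ ¬ E x₀ y}) ∧
    (∀ x x' : X, x ≠ x' → ∀ y y' : Y, E x y → ¬ E x₀ y → E x' y' → ¬ E x₀ y' →
      ¬ (halfSquare (Function.swap E)).Adj y y') ∧
    (∃ (A : Type) (S : SimpleGraph A), IsSplitGraph S ∧
      ObtainedBySubstCliques (halfSquare (Function.swap E)) S) := by
  refine ⟨isClique_halfSquare_setOf_s7 _ x₀,
    fun x => (isClique_halfSquare_setOf_s7 _ x).subset fun _ hy => hy.1, ?_,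
    _, _, h.isSplitGraph_twinReduction, obtainedBySubstCliques_twinReduction⟩
  rintro x x' hxx' y y' hxy hy hx'y' hy' ⟨-, z, hzy, hzy'⟩
  exact hxx' ((h.eq_of_not_center hy hxy hzy).trans (h.eq_of_not_center hy' hzy' hx'y'))
end

section
/- Every split graph is a half-square of a star convex bipartite graph. Concretely, if G = (V, E_G) is a split graph with V = Q ∪ S, Q a clique and S a stable set, then the bipartite graph H = (X, V, E_H) with X = {x₀} ∪ {x_s : s ∈ S}, where x₀ is adjacent to all of Q, and each x_s is adjacent to s and to N_G(s) ∩ Q, satisfies G = H²[V], and H is star convex with star on X centered at x₀. -/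
/-- The incidence relation of the bipartite graph `H = (X, V, E_H)` with
`X = {x₀} ∪ {x_s : s ∈ S}` (encoded as `Option S` with `x₀ = none`): `x₀` is adjacent
to all of `Q`, and each `x_s` is adjacent to `s` and to `N_G(s) ∩ Q`. -/
def splitRel {V : Type} (G : SimpleGraph V) (Q S : Set V) : V → Option S → Prop :=
  fun v x => match x with
    | none => v ∈ Q
    | some s => v = s.val ∨ (v ∈ Q ∧ G.Adj s.val v)

/-!
Two vertices with a common neighbour `x₀` both lie in the clique `Q`, and two vertices with a
common neighbour `x_s` are `s` and a neighbour of `s`, or both lie in `Q`; so `H²[V] ≤ G`.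
Conversely an edge of `G` lies inside `Q`, covered by `x₀`, or joins some `s ∈ S` to a vertex
of `Q` (as `S` is stable), covered by `x_s`. A vertex `v` outside `Q` has `x_v` as its only
neighbour, so every neighbourhood of size at least two belongs to a vertex of `Q = N(x₀)`.
-/

namespace splitRel

variable {V : Type} (G : SimpleGraph V) (Q S : Set V)

lemma halfSquare_le (hQ : G.IsClique Q) : halfSquare (splitRel G Q S) ≤ G := by
  rintro u v ⟨hne, x, hu, hv⟩
  cases x with
  | none => exact hQ hu hv hne
  | some s =>
    rcases hu with rfl | ⟨huQ, hsu⟩ <;> rcases hv with rfl | ⟨hvQ, hsv⟩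
    · exact absurd rfl hne
    · exact hsv
    · exact hsu.symm
    · exact hQ huQ hvQ hne

lemma le_halfSquare (hpart : ∀ v, v ∈ Q ↔ v ∉ S) (hS : ∀ a ∈ S, ∀ b ∈ S, ¬ G.Adj a b) :
    G ≤ halfSquare (splitRel G Q S) := by
  intro u v hadj
  refine ⟨hadj.ne, ?_⟩
  by_cases huS : u ∈ S
  · have hvQ : v ∈ Q := (hpart v).mpr fun hvS => hS u huS v hvS hadj
    exact ⟨some ⟨u, huS⟩, Or.inl rfl, Or.inr ⟨hvQ, hadj⟩⟩
  by_cases hvS : v ∈ S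
  · exact ⟨some ⟨v, hvS⟩, Or.inr ⟨(hpart u).mpr huS, hadj.symm⟩, Or.inl rfl⟩
  · exact ⟨none, (hpart u).mpr huS, (hpart v).mpr hvS⟩

lemma eq_of_not_mem {v : V} {s : S} (hv : v ∉ Q) (h : splitRel G Q S v (some s)) :
    v = s := h.resolve_right fun h' => hv h'.1

lemma isStarConvex : IsStarConvex (Function.swap (splitRel G Q S)) none := by
  intro v x x' hx hx' hne
  by_contra hvQ
  cases x with
  | none => exact hvQ hx
  | some s =>
    cases x' with
    | none => exact hvQ hx'
    | some s' =>
      refine hne (congrArg some (Subtype.ext ?_))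
      rw [← eq_of_not_mem G Q S hvQ hx, ← eq_of_not_mem G Q S hvQ hx']

end splitRel

/-- Every split graph is a half-square of a star convex bipartite graph: for a split
graph `G` with clique `Q` and stable set `S`, the bipartite graph `H` above satisfies
`G = H²[V]` and is star convex with star on `X` centered at `x₀`. -/
theorem stmt_9 {V : Type} (G : SimpleGraph V) (Q S : Set V)
    (hpart : ∀ v, v ∈ Q ↔ v ∉ S)
    (hQ : G.IsClique Q)
    (hS : ∀ a ∈ S, ∀ b ∈ S, ¬ G.Adj a b) :
    halfSquare (splitRel G Q S) = G ∧
    IsStarConvex (Function.swap (splitRel G Q S)) (none : Option S) :=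
  ⟨le_antisymm (splitRel.halfSquare_le G Q S hQ) (splitRel.le_halfSquare G Q S hpart hS),
    splitRel.isStarConvex G Q S⟩
end

section
/- Every graph obtained from a split graph by substituting vertices by cliques is a half-square of a star convex bipartite graph. -/
/- Let `K` be the clique of the split graph `S` and `I` its complement. Take as bipartite
partner the stable vertices `I` together with a hub `⋆` (`none` below): each clique vertex is
joined to `⋆` and to its stable neighbours, each stable vertex only to its own copy. Then two
vertices of `S` share a partner iff they are equal or adjacent, the neighbourhood of a stable
vertex is a single point, and that of a clique vertex contains `⋆`, the star's centre.
Substituting cliques just pulls the incidence back along the substitution map. -/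

theorem IsStarConvex.comp_right {X Y Z : Type*} {E : X → Y → Prop} {x₀ : X}
    (hE : IsStarConvex E x₀) (f : Z → Y) : IsStarConvex (fun x z => E x (f z)) x₀ :=
  fun z => hE (f z)

theorem halfSquare_comp_eq {V A W : Type*} {G : SimpleGraph V} {S : SimpleGraph A}
    {E : A → W → Prop} {f : V → A}
    (hE : ∀ a b, (∃ w, E a w ∧ E b w) ↔ a = b ∨ S.Adj a b)
    (hG : ∀ u v, u ≠ v → (G.Adj u v ↔ (f u = f v ∨ S.Adj (f u) (f v)))) :
    halfSquare (fun v => E (f v)) = G := by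
  ext u v
  change (u ≠ v ∧ _) ↔ _
  by_cases huv : u = v
  · simp [huv]
  · rw [hG u v huv, ← hE]
    exact and_iff_right huv

section SplitIncidence

variable {A : Type*} (S : SimpleGraph A) (K : Set A)

def splitIncidence : A → Option {b // b ∉ K} → Prop
  | a, none => a ∈ K
  | a, some b => a = b ∨ (a ∈ K ∧ S.Adj a b)

theorem isStarConvex_splitIncidence :
    IsStarConvex (Function.swap (splitIncidence S K)) none := by
  rintro a (_ | b) (_ | c) ha hb hne
  · exact absurd rfl hne
  · exact ha
  · exact hb
  · rcases ha with rfl | ⟨haK, -⟩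
    · rcases hb with hab | ⟨haK, -⟩
      · exact absurd (congrArg some (Subtype.ext hab)) hne
      · exact haK
    · exact haK

variable {S K}

theorem exists_splitIncidence_iff (hK : S.IsClique K) (hI : ∀ a ∉ K, ∀ b ∉ K, ¬ S.Adj a b)
    (a b : A) :
    (∃ w, splitIncidence S K a w ∧ splitIncidence S K b w) ↔ a = b ∨ S.Adj a b := by
  constructor
  · rintro ⟨_ | c, ha, hb⟩
    · exact or_iff_not_imp_left.mpr (hK ha hb)
    · rcases ha with rfl | ⟨haK, hac⟩ <;> rcases hb with hbc | ⟨hbK, hbc⟩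
      · exact Or.inl hbc.symm
      · exact Or.inr hbc.symm
      · exact Or.inr (hbc ▸ hac)
      · exact or_iff_not_imp_left.mpr (hK haK hbK)
  · rintro (rfl | hab)
    · by_cases ha : a ∈ K
      · exact ⟨none, ha, ha⟩
      · exact ⟨some ⟨a, ha⟩, Or.inl rfl, Or.inl rfl⟩
    · by_cases ha : a ∈ K <;> by_cases hb : b ∈ K
      · exact ⟨none, ha, hb⟩
      · exact ⟨some ⟨b, hb⟩, Or.inr ⟨ha, hab⟩, Or.inl rfl⟩
      · exact ⟨some ⟨a, ha⟩, Or.inl rfl, Or.inr ⟨hb, hab.symm⟩⟩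
      · exact absurd hab (hI a ha b hb)

end SplitIncidence

/-- Every graph obtained from a split graph by substituting vertices by cliques is a
half-square of a star convex bipartite graph. -/
theorem stmt_10 {V : Type} (G : SimpleGraph V)
    (h : ∃ (A : Type) (S : SimpleGraph A), IsSplitGraph S ∧ ObtainedBySubstCliques G S) :
    ∃ (W : Type) (E : V → W → Prop) (w₀ : W),
      IsStarConvex (Function.swap E) w₀ ∧ halfSquare E = G := by
  obtain ⟨A, S, ⟨K, hK, hI⟩, f, -, hG⟩ := h
  exact ⟨_, fun v => splitIncidence S K (f v), none,
    (isStarConvex_splitIncidence S K).comp_right f,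
    halfSquare_comp_eq (exists_splitIncidence_iff hK hI) hG⟩
end

section
/- Half-squares of biconvex bipartite graphs are K_{1,3}-free: if B = (X, Y, E_B) is a biconvex bipartite graph, then B²[X] (and by symmetry B²[Y]) contains no induced K_{1,3} (claw). Equivalently, a biconvex bipartite graph contains no induced subdivision of K_{1,3}, and an induced claw in B²[X] would yield such a subdivision in B. -/
/-- `E : X → Y → Prop` is convex with respect to the linear order `le` on `X`:
each neighborhood `N(y)` is an interval of `X`. -/
def ConvexIn {X Y : Type*} (le : X → X → Prop) (E : X → Y → Prop) : Prop :=
  IsLinearOrder X le ∧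
  ∀ y x₁ x₂ x₃, le x₁ x₂ → le x₂ x₃ → E x₁ y → E x₃ y → E x₂ y

/-- `G` contains no induced `K_{1,3}` (claw): there is no vertex `c` with three pairwise
distinct, pairwise nonadjacent neighbors. -/
def ClawFree {V : Type*} (G : SimpleGraph V) : Prop :=
  ∀ c a b d : V, a ≠ b → a ≠ d → b ≠ d →
    G.Adj c a → G.Adj c b → G.Adj c d →
    ¬ G.Adj a b → ¬ G.Adj a d → ¬ G.Adj b d → False

/-!
Fix the linear order on `X` in which every neighbourhood `N(y)` is an interval. Of the three
leaves of a claw centred at `c`, one, `m`, lies between the other two, and it also lies between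
`c` and one of them, say `v`. The common neighbour of `c` and `v` then has `m` in its interval,
so `m` and `v` are adjacent, contradicting that the leaves are pairwise nonadjacent.
-/

def Between {X : Type*} (le : X → X → Prop) (u m v : X) : Prop :=
  le u m ∧ le m v ∨ le v m ∧ le m u

section Between

variable {X : Type*} {le : X → X → Prop}

theorem between_trichotomy [Std.Total le] (a b d : X) :
    Between le b a d ∨ Between le a b d ∨ Between le a d b := by
  unfold Between
  rcases total_of le a b with hab | hba <;> rcases total_of le a d with had | hda <;>
    rcases total_of le b d with hbd | hdb <;> tauto

theorem Between.left_or_right [Std.Total le] {u m v : X} (h : Between le u m v) (c : X) :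
    Between le c m u ∨ Between le c m v := by
  unfold Between at *
  rcases total_of le c m with hcm | hmc <;> tauto

end Between

namespace ConvexIn

variable {X Y : Type*} {le : X → X → Prop} {E : X → Y → Prop}

theorem mem_of_between (h : ConvexIn le E) {u m v : X} {y : Y}
    (hm : Between le u m v) (hu : E u y) (hv : E v y) : E m y := by
  rcases hm with ⟨hum, hmv⟩ | ⟨hvm, hmu⟩
  · exact h.2 y u m v hum hmv hu hv
  · exact h.2 y v m u hvm hmu hv hu

theorem halfSquare_adj_of_between (h : ConvexIn le E) {c m v : X}
    (hm : Between le c m v) (hcv : (halfSquare E).Adj c v) (hmv : m ≠ v) :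
    (halfSquare E).Adj m v := by
  obtain ⟨-, y, hc, hv⟩ := hcv
  exact ⟨hmv, y, h.mem_of_between hm hc hv, hv⟩

theorem halfSquare_adj_or_adj_of_between (h : ConvexIn le E) {c u m v : X}
    (hm : Between le u m v) (hcu : (halfSquare E).Adj c u) (hcv : (halfSquare E).Adj c v)
    (hmu : m ≠ u) (hmv : m ≠ v) :
    (halfSquare E).Adj m u ∨ (halfSquare E).Adj m v :=
  have : Std.Total le := h.1.toTotal
  (hm.left_or_right c).imp (h.halfSquare_adj_of_between · hcu hmu)
    (h.halfSquare_adj_of_between · hcv hmv)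

theorem clawFree_halfSquare (h : ConvexIn le E) : ClawFree (halfSquare E) := by
  have : Std.Total le := h.1.toTotal
  intro c a b d hab had hbd hca hcb hcd nab nad nbd
  rcases between_trichotomy (le := le) a b d with hm | hm | hm
  · exact (h.halfSquare_adj_or_adj_of_between hm hcb hcd hab had).elim nab nad
  · exact (h.halfSquare_adj_or_adj_of_between hm hca hcd hab.symm hbd).elim
      (nab ·.symm) nbd
  · exact (h.halfSquare_adj_or_adj_of_between hm hca hcb had.symm hbd.symm).elim
      (nad ·.symm) (nbd ·.symm)

end ConvexIn

/-- Half-squares of biconvex bipartite graphs are `K_{1,3}`-free: if `E : X → Y → Prop`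
is convex with respect to linear orders on both `X` and `Y`, then both half-squares
`B²[X]` and `B²[Y]` contain no induced claw. -/
theorem stmt_13 {X Y : Type} (E : X → Y → Prop)
    (leX : X → X → Prop) (leY : Y → Y → Prop)
    (hX : ConvexIn leX E) (hY : ConvexIn leY (Function.swap E)) :
    ClawFree (halfSquare E) ∧ ClawFree (halfSquare (Function.swap E)) :=
  ⟨hX.clawFree_halfSquare, hY.clawFree_halfSquare⟩
end

section
/- Every interval graph is a half-square of a convex bipartite graph: if G = (V, E_G) is an interval graph with maximal cliques linearly ordered as Q₁, …, Q_q such that each vertex belongs to a consecutive set of cliques, then the vertex-clique incidence bipartite graph B = (V, 𝒞(G), E_B) is 𝒞(G)-convex and G = B²[V]. -/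
/-!
An edge `uv` of `G` is a clique, so by Zorn's lemma it extends to a maximal clique, which is
some `Q i`; hence adjacent vertices share a clique. Conversely two distinct vertices sharing a
clique are adjacent. This identifies `G` with the half-square of the vertex-clique incidence
graph, and convexity of that graph is exactly the consecutiveness of the clique ordering.
-/

namespace SimpleGraph

variable {V : Type*} {G : SimpleGraph V}

lemma maximalClique_iff_maximal_isClique {C : Set V} :
    MaximalClique G C ↔ Maximal G.IsClique C := by
  rw [isMaximalClique_iff, MaximalClique]
  refine and_congr_right fun _ => forall₂_congr fun D _ => imp_congr_right fun hCD => ?_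
  exact ⟨fun h => h.le, fun h => h.antisymm hCD⟩

lemma IsClique.exists_maximal_superset {s : Set V} (hs : G.IsClique s) :
    ∃ C, s ⊆ C ∧ Maximal G.IsClique C :=
  zorn_subset_nonempty {t | G.IsClique t}
    (fun c hc hchain _ => ⟨⋃₀ c, (isClique_sUnion hchain.directedOn).2 fun _ ht => hc ht,
      fun _ => Set.subset_sUnion_of_mem⟩) s hs

lemma Adj.exists_maximalClique {u v : V} (h : G.Adj u v) :
    ∃ C, MaximalClique G C ∧ u ∈ C ∧ v ∈ C := by
  obtain ⟨C, hsub, hC⟩ := (isClique_pair.2 fun _ => h).exists_maximal_superset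
  exact ⟨C, maximalClique_iff_maximal_isClique.2 hC, hsub (by simp), hsub (by simp)⟩

lemma halfSquare_eq_of_isClique_of_cover {ι : Type*} (Q : ι → Set V) (hclique : ∀ i, G.IsClique (Q i))
    (hcover : ∀ u v, G.Adj u v → ∃ i, u ∈ Q i ∧ v ∈ Q i) :
    halfSquare (fun v i => v ∈ Q i) = G := by
  ext u v
  constructor
  · rintro ⟨hne, i, hu, hv⟩
    exact hclique i hu hv hne
  · intro h
    exact ⟨h.ne, hcover u v h⟩

end SimpleGraph

theorem stmt_15_general {V : Type} (G : SimpleGraph V) (q : ℕ) (Q : Fin q → Set V)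
    (hmax : ∀ i, MaximalClique G (Q i))
    (hall : ∀ C, MaximalClique G C → ∃! i, Q i = C)
    (hconsec : ∀ v : V, ∀ i j l : Fin q, i ≤ j → j ≤ l → v ∈ Q i → v ∈ Q l → v ∈ Q j) :
    ConvexIn (fun i j : Fin q => i ≤ j) (fun (i : Fin q) (v : V) => v ∈ Q i) ∧
    halfSquare (fun (v : V) (i : Fin q) => v ∈ Q i) = G := by
  refine ⟨⟨inferInstance, hconsec⟩, SimpleGraph.halfSquare_eq_of_isClique_of_cover Q (fun i => (hmax i).1) ?_⟩
  intro u v h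
  obtain ⟨C, hC, huC, hvC⟩ := h.exists_maximalClique
  obtain ⟨i, rfl, -⟩ := hall C hC
  exact ⟨i, huC, hvC⟩

/-- Every interval graph is a half-square of a convex bipartite graph: if the maximal
cliques of `G` can be enumerated as `Q 0, …, Q (q-1)` so that each vertex lies in a
consecutive set of cliques, then the vertex-clique incidence bipartite graph of `G` is
convex with respect to the clique class and `G = B²[V]`. -/
theorem stmt_15 {V : Type} [Fintype V] (G : SimpleGraph V) (q : ℕ) (Q : Fin q → Set V)
    (hmax : ∀ i, MaximalClique G (Q i))
    (hall : ∀ C, MaximalClique G C → ∃! i, Q i = C)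
    (hconsec : ∀ v : V, ∀ i j l : Fin q, i ≤ j → j ≤ l → v ∈ Q i → v ∈ Q l → v ∈ Q j) :
    ConvexIn (fun i j : Fin q => i ≤ j) (fun (i : Fin q) (v : V) => v ∈ Q i) ∧
    halfSquare (fun (v : V) (i : Fin q) => v ∈ Q i) = G :=
  stmt_15_general G q Q hmax hall hconsec
end

section
/- A graph is a half-square of a biconvex bipartite graph if and only if it is a unit interval graph. In particular, for a unit interval graph G, the vertex-clique incidence bipartite graph of G is biconvex: with the maximal cliques Q₁,…,Q_q in consecutive order and vertices sorted lexicographically by (ℓ(v), r(v)) where v belongs exactly to Q_{ℓ(v)},…,Q_{r(v)}, each clique's neighborhood is an interval of vertices. -/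
/-- `G` is an interval graph: intersection graph of (nonempty) closed intervals
`[l v, r v]` on some linearly ordered set. -/
def IsIntervalGraph {V : Type*} (G : SimpleGraph V) : Prop :=
  ∃ (L : Type) (le : L → L → Prop) (_ : IsLinearOrder L le) (l r : V → L),
    (∀ v, le (l v) (r v)) ∧
    ∀ u v, u ≠ v → (G.Adj u v ↔ (le (l u) (r v) ∧ le (l v) (r u)))

/-- A unit interval graph: a `K_{1,3}`-free interval graph. -/
def IsUnitIntervalGraph {V : Type*} (G : SimpleGraph V) : Prop :=
  IsIntervalGraph G ∧ ClawFree G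

/-- `G` is a half-square of a biconvex bipartite graph. -/
def IsHalfSquareOfBiconvex {V : Type} (G : SimpleGraph V) : Prop :=
  ∃ (W : Type) (E : V → W → Prop) (leV : V → V → Prop) (leW : W → W → Prop),
    ConvexIn leV E ∧ ConvexIn leW (Function.swap E) ∧ halfSquare E = G

/-!
Both classes are the graphs admitting an *umbrella ordering*: a linear order of the vertices in
which `u < v < w` and `uw ∈ E` force `uv, vw ∈ E`.

In a half-square of a biconvex graph the order of `V` is one, since each `N(y)` is an interval.
Conversely, under an umbrella ordering closed neighbourhoods are intervals; hence the graph is the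
half-square of the biconvex incidence `v ≤ w ∧ v ∈ N[w]`, it is represented by the intervals
`[min N[v], v]`, and it has no claw because two neighbours on the same side of a vertex are
adjacent.

For a claw-free interval graph, move the left end of each interval up to the least right end in
its closed neighbourhood. Sorting lexicographically by (left end, right end) is then an umbrella
ordering: if `u < v < w`, `uw ∈ E` and `vw ∉ E`, then `u` and `v` have different left ends, and
the neighbour of `u` realising the left end of `u` forms a claw at `u` with `v` and `w`.

Under an umbrella ordering every maximal clique is an interval `[a, b]` with `b` increasing in
`a`, so ordering the maximal cliques by `a` makes the vertex-clique incidence biconvex.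
-/

open Set Function

noncomputable abbrev IsLinearOrder.toLinearOrder {α : Type*} (r : α → α → Prop)
    [IsLinearOrder α r] : LinearOrder α where
  le := r
  le_refl := refl_of r
  le_trans _ _ _ := trans_of r
  le_antisymm _ _ := antisymm_of r
  le_total := total_of r
  toDecidableLE := Classical.decRel r

lemma convexIn_iff_ordConnected {X Y : Type*} [LinearOrder X] {E : X → Y → Prop} :
    ConvexIn (· ≤ ·) E ↔ ∀ y, {x | E x y}.OrdConnected :=
  ⟨fun h y => ⟨fun _ h₁ _ h₃ x₂ hx₂ => h.2 y _ x₂ _ hx₂.1 hx₂.2 h₁ h₃⟩,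
    fun h => ⟨inferInstance, fun y _ _ _ h₁₂ h₂₃ h₁ h₃ => (h y).out h₁ h₃ ⟨h₁₂, h₂₃⟩⟩⟩

lemma exists_linearOrder_monotone {V α : Type*} [LinearOrder α] (f : V → α) :
    ∃ _ : LinearOrder V, Monotone f := by
  let : LinearOrder V := LinearOrder.lift' (fun v => toLex (f v, embeddingToCardinal v))
    fun _ _ h => embeddingToCardinal.injective (congrArg (fun p => (ofLex p).2) h)
  exact ⟨inferInstance, fun _ _ h => Prod.Lex.monotone_fst _ _ h⟩

lemma MaximalClique.nonempty {V : Type*} [Nonempty V] {G : SimpleGraph V} {C : Set V}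
    (hC : MaximalClique G C) : C.Nonempty := by
  obtain ⟨x⟩ := ‹Nonempty V›
  rw [nonempty_iff_ne_empty]
  rintro rfl
  exact singleton_ne_empty x (hC.2 {x} (SimpleGraph.isClique_singleton x) (empty_subset _))

lemma Set.Finite.exists_isLeast_isGreatest {α : Type*} [LinearOrder α] {s : Set α}
    (hs : s.Finite) (hne : s.Nonempty) : ∃ a b, IsLeast s a ∧ IsGreatest s b := by
  obtain ⟨a, ha, hmin⟩ := s.exists_min_image id hs hne
  obtain ⟨b, hb, hmax⟩ := s.exists_max_image id hs hne
  exact ⟨a, b, ⟨ha, fun x hx => hmin x hx⟩, ⟨hb, fun x hx => hmax x hx⟩⟩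

namespace SimpleGraph

variable {V : Type*} {G : SimpleGraph V}

variable (G) in
def closedNeighborSet (v : V) : Set V := insert v (G.neighborSet v)

@[simp]
lemma mem_closedNeighborSet {v x : V} : x ∈ G.closedNeighborSet v ↔ x = v ∨ G.Adj v x :=
  Iff.rfl

lemma mem_closedNeighborSet_comm {v x : V} :
    x ∈ G.closedNeighborSet v ↔ v ∈ G.closedNeighborSet x := by
  simp [eq_comm, adj_comm]

variable (G) in
def IsUmbrellaOrdered [LinearOrder V] : Prop :=
  ∀ ⦃u v w : V⦄, u < v → v < w → G.Adj u w → G.Adj u v ∧ G.Adj v w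

lemma isUmbrellaOrdered_halfSquare {W : Type*} [LinearOrder V] {E : V → W → Prop}
    (hE : ∀ w, {v | E v w}.OrdConnected) : (halfSquare E).IsUmbrellaOrdered := by
  rintro u v w huv hvw ⟨-, y, hu, hw⟩
  have hv : E v y := (hE y).out hu hw ⟨huv.le, hvw.le⟩
  exact ⟨⟨huv.ne, y, hu, hv⟩, ⟨hvw.ne, y, hv, hw⟩⟩

namespace IsUmbrellaOrdered

variable [LinearOrder V]

lemma adj_of_adj_of_adj (hG : G.IsUmbrellaOrdered) {v x y : V} (hx : G.Adj v x)
    (hy : G.Adj v y) (hxy : x ≠ y) (hside : x < v ↔ y < v) : G.Adj x y := by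
  wlog h : x < y generalizing x y
  · exact (this hy hx hxy.symm hside.symm ((lt_or_gt_of_ne hxy).resolve_left h)).symm
  by_cases hyv : y < v
  · exact (hG h hyv hx.symm).1
  · have hvx : v < x := (lt_or_gt_of_ne hx.ne).resolve_right fun hxv => hyv (hside.mp hxv)
    exact (hG hvx h hy).2

lemma clawFree (hG : G.IsUmbrellaOrdered) : ClawFree G := by
  intro c a b d hab had hbd hca hcb hcd hnab hnad hnbd
  have : (a < c ↔ b < c) ∨ (a < c ↔ d < c) ∨ (b < c ↔ d < c) := by tauto
  rcases this with h | h | h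
  · exact hnab (hG.adj_of_adj_of_adj hca hcb hab h)
  · exact hnad (hG.adj_of_adj_of_adj hca hcd had h)
  · exact hnbd (hG.adj_of_adj_of_adj hcb hcd hbd h)

lemma ordConnected_closedNeighborSet (hG : G.IsUmbrellaOrdered) (v : V) :
    (G.closedNeighborSet v).OrdConnected := by
  refine ⟨fun x hx z hz y ⟨hxy, hyz⟩ => ?_⟩
  rcases lt_trichotomy y v with hyv | rfl | hvy
  · rcases hx with rfl | hx
    · exact absurd (hxy.trans_lt hyv) (lt_irrefl _)
    rcases hxy.eq_or_lt with rfl | hxy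
    · exact Or.inr hx
    · exact Or.inr (hG hxy hyv hx.symm).2.symm
  · exact Or.inl rfl
  · rcases hz with rfl | hz
    · exact absurd (hvy.trans_le hyz) (lt_irrefl _)
    rcases hyz.eq_or_lt with rfl | hyz
    · exact Or.inr hz
    · exact Or.inr (hG hvy hyz hz).1

lemma isHalfSquareOfBiconvex {V : Type} [LinearOrder V] {G : SimpleGraph V}
    (hG : G.IsUmbrellaOrdered) : IsHalfSquareOfBiconvex G := by
  refine ⟨V, fun v w => v ≤ w ∧ v ∈ G.closedNeighborSet w, (· ≤ ·), (· ≤ ·),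
    convexIn_iff_ordConnected.mpr fun w => ordConnected_Iic.inter
      (hG.ordConnected_closedNeighborSet w),
    convexIn_iff_ordConnected.mpr fun v => ?_, ?_⟩
  · convert ordConnected_Ici.inter (hG.ordConnected_closedNeighborSet v) using 1
    ext w
    exact and_congr_right fun _ => mem_closedNeighborSet_comm
  · ext u v
    constructor
    · rintro ⟨huv, w, ⟨huw, hu⟩, ⟨hvw, hv⟩⟩
      rcases hu with rfl | hu
      · exact hv.resolve_left huv.symm
      rcases hv with rfl | hv
      · exact hu.symm
      exact hG.adj_of_adj_of_adj hu hv huv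
        (iff_of_true (huw.lt_of_ne hu.ne') (hvw.lt_of_ne hv.ne'))
    · intro huv
      rcases le_total u v with h | h
      · exact ⟨huv.ne, v, ⟨h, Or.inr huv.symm⟩, ⟨le_rfl, Or.inl rfl⟩⟩
      · exact ⟨huv.ne, u, ⟨le_rfl, Or.inl rfl⟩, ⟨h, Or.inr huv⟩⟩

lemma isClique_Icc (hG : G.IsUmbrellaOrdered) {a b : V} (hab : G.Adj a b) :
    G.IsClique (Icc a b) := by
  have hsub : Icc a b ⊆ G.closedNeighborSet b :=
    (hG.ordConnected_closedNeighborSet b).out (Or.inr hab.symm) (Or.inl rfl)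
  intro x hx y hy hxy
  rcases hsub hx with rfl | hbx
  · exact (hsub hy).resolve_left hxy.symm
  rcases hsub hy with rfl | hby
  · exact hbx.symm
  exact hG.adj_of_adj_of_adj hbx hby hxy
    (iff_of_true (hx.2.lt_of_ne hbx.ne') (hy.2.lt_of_ne hby.ne'))

lemma eq_Icc_of_maximalClique (hG : G.IsUmbrellaOrdered) {C : Set V} (hC : MaximalClique G C)
    {a b : V} (ha : IsLeast C a) (hb : IsGreatest C b) : C = Icc a b := by
  refine (hC.2 (Icc a b) ?_ fun x hx => ⟨ha.2 hx, hb.2 hx⟩).symm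
  rcases eq_or_ne a b with rfl | hne
  · simp
  · exact hG.isClique_Icc (hC.1 ha.1 hb.1 hne)

lemma max_le_max_of_min_le (hG : G.IsUmbrellaOrdered) {C D : Set V} (hC : MaximalClique G C)
    (hD : MaximalClique G D) {a b a' b' : V} (ha : IsLeast C a) (hb : IsGreatest C b)
    (ha' : IsLeast D a') (hb' : IsGreatest D b') (h : a ≤ a') : b ≤ b' := by
  by_contra! h'
  have hDC : D ⊆ C := by
    rw [hG.eq_Icc_of_maximalClique hC ha hb]
    exact fun x hx => ⟨h.trans (ha'.2 hx), (hb'.2 hx).trans h'.le⟩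
  exact h'.not_ge (hb'.2 (hD.2 C hC.1 hDC ▸ hb.1))

variable [Finite V]

lemma ordConnected_of_maximalClique (hG : G.IsUmbrellaOrdered) {C : Set V}
    (hC : MaximalClique G C) : C.OrdConnected := by
  rcases C.eq_empty_or_nonempty with rfl | hne
  · exact ordConnected_empty
  obtain ⟨a, b, ha, hb⟩ := C.toFinite.exists_isLeast_isGreatest hne
  rw [hG.eq_Icc_of_maximalClique hC ha hb]
  exact ordConnected_Icc

lemma convexIn_mem_maximalClique (hG : G.IsUmbrellaOrdered) :
    ConvexIn (· ≤ ·) (fun (v : V) (C : {C : Set V // MaximalClique G C}) => v ∈ C.val) :=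
  convexIn_iff_ordConnected.mpr fun C => hG.ordConnected_of_maximalClique C.2

lemma exists_convexIn_maximalClique_mem (hG : G.IsUmbrellaOrdered) :
    ∃ leC : {C : Set V // MaximalClique G C} → {C : Set V // MaximalClique G C} → Prop,
      ConvexIn leC
        (Function.swap (fun (v : V) (C : {C : Set V // MaximalClique G C}) => v ∈ C.val)) := by
  rcases isEmpty_or_nonempty V with hV | hV
  · have : Subsingleton {C : Set V // MaximalClique G C} :=
      ⟨fun C D => Subtype.ext (Subsingleton.elim _ _)⟩
    exact ⟨(· ≤ ·) on fun _ => (),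
      (Function.injective_of_subsingleton _).isLinearOrder_onFun _, isEmptyElim⟩
  choose lo hi hlo hhi using fun C : {C : Set V // MaximalClique G C} =>
    C.1.toFinite.exists_isLeast_isGreatest C.2.nonempty
  have hmono : ∀ {C D}, lo C ≤ lo D → hi C ≤ hi D := fun {C D} h =>
    hG.max_le_max_of_min_le C.2 D.2 (hlo C) (hhi C) (hlo D) (hhi D) h
  have hIcc : ∀ C, C.1 = Icc (lo C) (hi C) := fun C =>
    hG.eq_Icc_of_maximalClique C.2 (hlo C) (hhi C)
  have hinj : Function.Injective lo := fun C D h =>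
    Subtype.ext (by rw [hIcc C, hIcc D, h, (hmono h.le).antisymm (hmono h.ge)])
  refine ⟨(· ≤ ·) on lo, hinj.isLinearOrder_onFun _, fun v C₁ C₂ C₃ h₁₂ h₂₃ h₁ h₃ => ?_⟩
  change v ∈ C₂.1
  rw [hIcc C₂]
  exact ⟨h₂₃.trans ((hlo C₃).2 h₃), ((hhi C₁).2 h₁).trans (hmono h₁₂)⟩

end IsUmbrellaOrdered

def IsIntervalModel {L : Type*} [LinearOrder L] (G : SimpleGraph V) (l r : V → L) : Prop :=
  (∀ v, l v ≤ r v) ∧ ∀ u v, u ≠ v → (G.Adj u v ↔ l u ≤ r v ∧ l v ≤ r u)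

lemma isIntervalGraph_iff_exists_isIntervalModel {V : Type} {G : SimpleGraph V} :
    IsIntervalGraph G ↔ ∃ (L : Type) (_ : LinearOrder L) (l r : V → L), G.IsIntervalModel l r := by
  constructor
  · rintro ⟨L, le, hle, l, r, h⟩
    let := IsLinearOrder.toLinearOrder le
    exact ⟨L, inferInstance, l, r, h⟩
  · rintro ⟨L, _, l, r, h⟩
    exact ⟨L, (· ≤ ·), inferInstance, l, r, h⟩

lemma IsUmbrellaOrdered.isIntervalModel [LinearOrder V] [Finite V] (hG : G.IsUmbrellaOrdered) :
    ∃ l : V → V, G.IsIntervalModel l id := by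
  choose m hm hmin using fun v =>
    (G.closedNeighborSet v).exists_min_image id (toFinite _) ⟨v, Or.inl rfl⟩
  have adj_of_le : ∀ u v, u ≠ v → m v ≤ u → u ≤ v → G.Adj u v := fun u v huv h₁ h₂ =>
    (((hG.ordConnected_closedNeighborSet v).out (hm v) (Or.inl rfl) ⟨h₁, h₂⟩).resolve_left
      huv).symm
  refine ⟨m, fun v => hmin v v (Or.inl rfl), fun u v huv => ⟨fun hadj => ?_, fun h => ?_⟩⟩
  · exact ⟨hmin u v (Or.inr hadj), hmin v u (Or.inr hadj.symm)⟩
  · rcases le_total u v with huv' | hvu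
    · exact adj_of_le u v huv h.2 huv'
    · exact (adj_of_le v u huv.symm h.1 hvu).symm

namespace IsIntervalModel

variable {L : Type*} [LinearOrder L] {l r : V → L}

lemma exists_left_eq_right_of_closedNeighbor [Finite V] (h : G.IsIntervalModel l r) :
    ∃ a : V → L, G.IsIntervalModel a r ∧ ∀ u, ∃ x ∈ G.closedNeighborSet u, r x = a u := by
  choose x hx hmin using fun u =>
    (G.closedNeighborSet u).exists_min_image r (toFinite _) ⟨u, Or.inl rfl⟩
  have hl : ∀ u, l u ≤ r (x u) := fun u => by
    rcases hx u with hxu | hadj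
    · rw [hxu]
      exact h.1 u
    · exact ((h.2 u (x u) hadj.ne).mp hadj).1
  refine ⟨fun u => r (x u), ⟨fun v => hmin v v (Or.inl rfl), fun u v huv => ⟨fun hadj => ?_,
    fun ⟨h₁, h₂⟩ => (h.2 u v huv).mpr ⟨(hl u).trans h₁, (hl v).trans h₂⟩⟩⟩,
    fun u => ⟨x u, hx u, rfl⟩⟩
  exact ⟨hmin u v (Or.inr hadj), hmin v u (Or.inr hadj.symm)⟩

lemma isUmbrellaOrdered_of_monotone [LinearOrder V] {a b : V → L} (hcf : ClawFree G)
    (h : G.IsIntervalModel a b) (hab : ∀ u, ∃ x ∈ G.closedNeighborSet u, b x = a u)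
    (hmono : Monotone fun v => toLex (a v, b v)) : G.IsUmbrellaOrdered := by
  have separated : ∀ {x y}, b x < a y → x ≠ y ∧ ¬ G.Adj x y := fun hxy =>
    ⟨by rintro rfl; exact (h.1 _).not_gt hxy,
      fun hadj => ((h.2 _ _ hadj.ne).mp hadj).2.not_gt hxy⟩
  intro u v w huv hvw huw
  have huv' := Prod.Lex.toLex_le_toLex.mp (hmono huv.le)
  have hauv : a u ≤ a v := Prod.Lex.monotone_fst _ _ (hmono huv.le)
  have havw : a v ≤ a w := Prod.Lex.monotone_fst _ _ (hmono hvw.le)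
  have hwu : a w ≤ b u := ((h.2 u w huw.ne).mp huw).2
  have huv_adj : G.Adj u v := (h.2 u v huv.ne).mpr ⟨hauv.trans (h.1 v), havw.trans hwu⟩
  refine ⟨huv_adj, (h.2 v w hvw.ne).mpr ⟨havw.trans (h.1 w), ?_⟩⟩
  by_contra! hvw_sep
  have hauv_lt : a u < a v := hauv.lt_of_ne fun heq =>
    hvw_sep.not_ge (hwu.trans (huv'.resolve_left heq.not_lt).2)
  obtain ⟨x, hx, hbx⟩ := hab u
  have hxv : b x < a v := hbx ▸ hauv_lt
  have hxw : b x < a w := hxv.trans_le havw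
  have hux : G.Adj u x := hx.resolve_left (by rintro rfl; exact (separated hxv).2 huv_adj)
  exact hcf u x v w (separated hxv).1 (separated hxw).1 (separated hvw_sep).1 hux huv_adj huw
    (separated hxv).2 (separated hxw).2 (separated hvw_sep).2

lemma exists_isUmbrellaOrdered [Finite V] (h : G.IsIntervalModel l r) (hcf : ClawFree G) :
    ∃ _ : LinearOrder V, G.IsUmbrellaOrdered := by
  obtain ⟨a, ha, hattained⟩ := h.exists_left_eq_right_of_closedNeighbor
  obtain ⟨_, hmono⟩ := exists_linearOrder_monotone fun v => toLex (a v, r v)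
  exact ⟨_, ha.isUmbrellaOrdered_of_monotone hcf hattained hmono⟩

end IsIntervalModel

end SimpleGraph

open SimpleGraph

lemma isHalfSquareOfBiconvex_iff_exists_isUmbrellaOrdered {V : Type} (G : SimpleGraph V) :
    IsHalfSquareOfBiconvex G ↔ ∃ _ : LinearOrder V, G.IsUmbrellaOrdered := by
  constructor
  · rintro ⟨W, E, leV, -, hE, -, rfl⟩
    have := hE.1
    let := IsLinearOrder.toLinearOrder leV
    exact ⟨_, isUmbrellaOrdered_halfSquare (convexIn_iff_ordConnected.mp hE)⟩
  · rintro ⟨_, hG⟩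
    exact hG.isHalfSquareOfBiconvex

lemma isUnitIntervalGraph_iff_exists_isUmbrellaOrdered {V : Type} [Finite V] (G : SimpleGraph V) :
    IsUnitIntervalGraph G ↔ ∃ _ : LinearOrder V, G.IsUmbrellaOrdered := by
  constructor
  · rintro ⟨hint, hcf⟩
    obtain ⟨L, _, l, r, h⟩ := isIntervalGraph_iff_exists_isIntervalModel.mp hint
    exact h.exists_isUmbrellaOrdered hcf
  · rintro ⟨_, hG⟩
    obtain ⟨l, hl⟩ := hG.isIntervalModel
    exact ⟨isIntervalGraph_iff_exists_isIntervalModel.mpr ⟨V, _, l, id, hl⟩, hG.clawFree⟩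

/-- A graph is a half-square of a biconvex bipartite graph iff it is a unit interval
graph; in particular, for a unit interval graph `G` the vertex-clique incidence
bipartite graph of `G` is biconvex (both classes admit linear orders in which all
neighborhoods are intervals). -/
theorem stmt_16 {V : Type} [Fintype V] (G : SimpleGraph V) :
    (IsHalfSquareOfBiconvex G ↔ IsUnitIntervalGraph G) ∧
    (IsUnitIntervalGraph G →
      ∃ (leV : V → V → Prop)
        (leC : {C : Set V // MaximalClique G C} → {C : Set V // MaximalClique G C} → Prop),
        ConvexIn leV (fun (v : V) (C : {C : Set V // MaximalClique G C}) => v ∈ C.val) ∧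
        ConvexIn leC
          (Function.swap (fun (v : V) (C : {C : Set V // MaximalClique G C}) => v ∈ C.val))) := by
  have hunit := isUnitIntervalGraph_iff_exists_isUmbrellaOrdered G
  refine ⟨(isHalfSquareOfBiconvex_iff_exists_isUmbrellaOrdered G).trans hunit.symm, fun h => ?_⟩
  obtain ⟨_, hG⟩ := hunit.mp h
  obtain ⟨leC, hC⟩ := hG.exists_convexIn_maximalClique_mem
  exact ⟨(· ≤ ·), leC, hG.convexIn_mem_maximalClique, hC⟩
end
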